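/- arXiv:1406.7607 — 3 statements merged into one kernel-verified Lean document; each statement's English description precedes it below -/
import Mathlib

section
/- If W = [W₁ W₂] is an orthogonal matrix of eigenvectors of C with corresponding eigenvalues λ₁ ≥ ⋯ ≥ λ_m, where W₁ contains the first n columns, and y = W₁^T x, z = W₂^T x, then ∫_X ‖∇_y f‖² ρ dx = λ₁ + ⋯ + λ_n and ∫_X ‖∇_z f‖² ρ dx = λ_{n+1} + ⋯ + λ_m. -/
/-!
Since `C` is the matrix of second moments of `∇f` under `ρ`, the mean square of any directional
derivative `v ⬝ᵥ ∇f` is the quadratic form `v ⬝ᵥ C *ᵥ v`. For `v` the `k`-th column of `W` this is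
the `k`-th diagonal entry of `Wᵀ C W = Λ`, i.e. `λ_k`; summing over the columns of `W₁`, resp. `W₂`,
gives the two identities.
-/

open MeasureTheory Matrix

noncomputable def grad {m : ℕ} (f : (Fin m → ℝ) → ℝ) (x : Fin m → ℝ) : Fin m → ℝ :=
  fun i => fderiv ℝ f x (Pi.single i 1)

section SecondMoment

variable {α ι : Type*} [MeasurableSpace α] {μ : Measure α} {m : Type*} [Fintype m]
  {g : α → m → ℝ} {ρ : α → ℝ}

lemma sq_dotProduct_mul (v w : m → ℝ) (r : ℝ) :
    (v ⬝ᵥ w) ^ 2 * r = ∑ i, ∑ j, v i * v j * (w i * w j * r) := by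
  rw [sq, dotProduct, Finset.sum_mul_sum, Finset.sum_mul]
  simp only [Finset.sum_mul]
  exact Finset.sum_congr rfl fun i _ => Finset.sum_congr rfl fun j _ => by ring

lemma integrable_sq_dotProduct_mul
    (hint : ∀ i j, Integrable (fun x => g x i * g x j * ρ x) μ) (v : m → ℝ) :
    Integrable (fun x => (v ⬝ᵥ g x) ^ 2 * ρ x) μ := by
  simp only [sq_dotProduct_mul]
  exact integrable_finsetSum _ fun i _ =>
    integrable_finsetSum _ fun j _ => (hint i j).const_mul _

lemma integral_sq_dotProduct_mul
    (hint : ∀ i j, Integrable (fun x => g x i * g x j * ρ x) μ) {C : Matrix m m ℝ}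
    (hC : ∀ i j, C i j = ∫ x, g x i * g x j * ρ x ∂μ) (v : m → ℝ) :
    ∫ x, (v ⬝ᵥ g x) ^ 2 * ρ x ∂μ = v ⬝ᵥ C *ᵥ v := by
  simp only [sq_dotProduct_mul]
  rw [integral_finsetSum _ fun i _ =>
    integrable_finsetSum _ fun j _ => (hint i j).const_mul _]
  simp only [dotProduct, mulVec, Finset.mul_sum, hC]
  refine Finset.sum_congr rfl fun i _ => ?_
  rw [integral_finsetSum _ fun j _ => (hint i j).const_mul _]
  refine Finset.sum_congr rfl fun j _ => ?_
  rw [integral_const_mul]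
  ring

lemma integral_sum_sq_dotProduct_mul
    (hint : ∀ i j, Integrable (fun x => g x i * g x j * ρ x) μ) {C : Matrix m m ℝ}
    (hC : ∀ i j, C i j = ∫ x, g x i * g x j * ρ x ∂μ) (S : Finset ι) (v : ι → m → ℝ) :
    ∫ x, (∑ k ∈ S, (v k ⬝ᵥ g x) ^ 2) * ρ x ∂μ = ∑ k ∈ S, v k ⬝ᵥ C *ᵥ v k := by
  simp only [Finset.sum_mul]
  rw [integral_finsetSum _ fun k _ => integrable_sq_dotProduct_mul hint (v k)]
  exact Finset.sum_congr rfl fun k _ => integral_sq_dotProduct_mul hint hC (v k)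

end SecondMoment

lemma transpose_mul_mul_eq_diagonal {m R : Type*} [Fintype m] [DecidableEq m] [CommRing R]
    {W C : Matrix m m R} {Λ : m → R} (hW : Wᵀ * W = 1) (hC : C = W * diagonal Λ * Wᵀ) :
    Wᵀ * C * W = diagonal Λ := by
  rw [hC, ← Matrix.mul_assoc, ← Matrix.mul_assoc, hW, Matrix.one_mul, Matrix.mul_assoc, hW,
    Matrix.mul_one]

lemma dotProduct_mulVec_column_eq {m R : Type*} [Fintype m] [DecidableEq m] [CommRing R]
    {W C : Matrix m m R} {Λ : m → R} (hW : Wᵀ * W = 1) (hC : C = W * diagonal Λ * Wᵀ) (k : m) :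
    Wᵀ k ⬝ᵥ C *ᵥ Wᵀ k = Λ k := by
  have hdiag := mul_mul_apply Wᵀ C W k k
  rw [transpose_mul_mul_eq_diagonal hW hC, diagonal_apply_eq] at hdiag
  exact hdiag.symm

theorem stmt3_general {m : ℕ} (n : ℕ)
    (ρ : (Fin m → ℝ) → ℝ)
    (f : (Fin m → ℝ) → ℝ)
    (hint : ∀ i j : Fin m, IntegrableOn (fun x => grad f x i * grad f x j * ρ x)
      (Set.Icc (-1 : Fin m → ℝ) 1) volume)
    (C : Matrix (Fin m) (Fin m) ℝ)
    (hC : ∀ i j, C i j = ∫ x in Set.Icc (-1 : Fin m → ℝ) 1, grad f x i * grad f x j * ρ x)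
    (W : Matrix (Fin m) (Fin m) ℝ) (hW : Wᵀ * W = 1)
    (Λ : Fin m → ℝ)
    (hdecomp : C = W * Matrix.diagonal Λ * Wᵀ) :
    (∫ x in Set.Icc (-1 : Fin m → ℝ) 1,
        (∑ k ∈ Finset.univ.filter (fun k : Fin m => (k : ℕ) < n),
          (∑ i, W i k * grad f x i)^2) * ρ x
      = ∑ k ∈ Finset.univ.filter (fun k : Fin m => (k : ℕ) < n), Λ k) ∧
    (∫ x in Set.Icc (-1 : Fin m → ℝ) 1,
        (∑ k ∈ Finset.univ.filter (fun k : Fin m => n ≤ (k : ℕ)),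
          (∑ i, W i k * grad f x i)^2) * ρ x
      = ∑ k ∈ Finset.univ.filter (fun k : Fin m => n ≤ (k : ℕ)), Λ k) := by
  have key (S : Finset (Fin m)) :
      ∫ x in Set.Icc (-1 : Fin m → ℝ) 1, (∑ k ∈ S, (Wᵀ k ⬝ᵥ grad f x) ^ 2) * ρ x
        = ∑ k ∈ S, Λ k := by
    rw [integral_sum_sq_dotProduct_mul hint hC S (fun k => Wᵀ k)]
    exact Finset.sum_congr rfl fun k _ => dotProduct_mulVec_column_eq hW hdecomp k
  exact ⟨key _, key _⟩

/-- with `C = W Λ Wᵀ` an eigendecomposition (orthogonal `W`, ordered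
eigenvalues), the mean-squared gradients with respect to the active coordinates
`y = W₁ᵀ x` (first `n` columns) and inactive coordinates `z = W₂ᵀ x` equal the
corresponding partial sums of eigenvalues. Here `(∇_y f)_k = ∑ i, W i k * (∇f)_i`
for `k < n`, and similarly for `z` with `k ≥ n`. -/
theorem stmt3 {m : ℕ} (n : ℕ) (hn : n ≤ m)
    (ρ : (Fin m → ℝ) → ℝ) (hρ : ∀ x ∈ Set.Icc (-1 : Fin m → ℝ) 1, 0 ≤ ρ x)
    (hρ1 : ∫ x in Set.Icc (-1 : Fin m → ℝ) 1, ρ x = 1)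
    (f : (Fin m → ℝ) → ℝ) (hf : ContDiff ℝ 1 f)
    (hint : ∀ i j : Fin m, IntegrableOn (fun x => grad f x i * grad f x j * ρ x)
      (Set.Icc (-1 : Fin m → ℝ) 1) volume)
    (C : Matrix (Fin m) (Fin m) ℝ)
    (hC : ∀ i j, C i j = ∫ x in Set.Icc (-1 : Fin m → ℝ) 1, grad f x i * grad f x j * ρ x)
    (W : Matrix (Fin m) (Fin m) ℝ) (hW : Wᵀ * W = 1)
    (Λ : Fin m → ℝ) (hord : Antitone Λ)
    (hdecomp : C = W * Matrix.diagonal Λ * Wᵀ) :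
    (∫ x in Set.Icc (-1 : Fin m → ℝ) 1,
        (∑ k ∈ Finset.univ.filter (fun k : Fin m => (k : ℕ) < n),
          (∑ i, W i k * grad f x i)^2) * ρ x
      = ∑ k ∈ Finset.univ.filter (fun k : Fin m => (k : ℕ) < n), Λ k) ∧
    (∫ x in Set.Icc (-1 : Fin m → ℝ) 1,
        (∑ k ∈ Finset.univ.filter (fun k : Fin m => n ≤ (k : ℕ)),
          (∑ i, W i k * grad f x i)^2) * ρ x
      = ∑ k ∈ Finset.univ.filter (fun k : Fin m => n ≤ (k : ℕ)), Λ k) :=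
  stmt3_general n ρ f hint C hC W hW Λ hdecomp
end

section
/- If w is a unit eigenvector of C with eigenvalue 0, and ρ is continuous and strictly positive on X, then (∇f(x))^T w = 0 for all x in X; consequently, if X is convex, f is constant along the direction w, i.e., f(x + tw) = f(x) whenever x and x + tw both lie in X. -/
open MeasureTheory Matrix

/-!
Expanding the square shows `∫_X ((∇f)ᵀ w)² ρ = wᵀ C w = 0`. The integrand is continuous and
nonnegative, so it vanishes almost everywhere on `X`, and since `ρ > 0` the directional
derivative `(∇f)ᵀ w` vanishes almost everywhere on `X`. A convex set with nonempty interior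
lies in the closure of its interior, so continuity upgrades this to all of `X`. Finally
`s ↦ f (x + s t w)` has zero derivative on `[0, 1]`, its path staying in `X` by convexity.
-/

theorem sum_grad_mul_eq_fderiv {m : ℕ} (f : (Fin m → ℝ) → ℝ) (x w : Fin m → ℝ) :
    ∑ i, grad f x i * w i = fderiv ℝ f x w := by
  conv_rhs => rw [← Finset.univ_sum_single w, map_sum]
  refine Finset.sum_congr rfl fun i _ => ?_
  rw [grad, mul_comm, ← smul_eq_mul, ← map_smul, ← Pi.single_smul, smul_eq_mul, mul_one]

theorem integral_sq_sum_mul_eq_dotProduct_mulVec {α ι : Type*} [MeasurableSpace α] [Fintype ι]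
    {μ : Measure α} (g : ι → α → ℝ) (ρ : α → ℝ)
    (hg : ∀ i j, Integrable (fun x => g i x * g j x * ρ x) μ)
    {C : Matrix ι ι ℝ} (hC : ∀ i j, C i j = ∫ x, g i x * g j x * ρ x ∂μ) (w : ι → ℝ) :
    ∫ x, (∑ i, g i x * w i) ^ 2 * ρ x ∂μ = w ⬝ᵥ C *ᵥ w := by
  have hexpand : ∀ x, (∑ i, g i x * w i) ^ 2 * ρ x =
      ∑ i, w i * ∑ j, g i x * g j x * ρ x * w j := by
    intro x
    rw [sq, Finset.sum_mul_sum, Finset.sum_mul]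
    refine Finset.sum_congr rfl fun i _ => ?_
    rw [Finset.sum_mul, Finset.mul_sum]
    exact Finset.sum_congr rfl fun j _ => by ring
  simp_rw [hexpand]
  rw [integral_finsetSum _ fun i _ =>
    (integrable_finsetSum _ fun j _ => (hg i j).mul_const _).const_mul _]
  simp only [dotProduct, mulVec, hC]
  refine Finset.sum_congr rfl fun i _ => ?_
  rw [integral_const_mul, integral_finsetSum _ fun j _ => (hg i j).mul_const _]
  simp_rw [integral_mul_const]

theorem eqOn_zero_of_setIntegral_sq_mul_eq_zero {α : Type*} [TopologicalSpace α]
    [MeasurableSpace α] {μ : Measure α} [μ.IsOpenPosMeasure] {s : Set α} (hsm : MeasurableSet s)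
    (hs : s ⊆ closure (interior s)) {g ρ : α → ℝ} (hg : ContinuousOn g s)
    (hρ : ∀ x ∈ s, 0 < ρ x) (hint : IntegrableOn (fun x => g x ^ 2 * ρ x) s μ)
    (h : ∫ x in s, g x ^ 2 * ρ x ∂μ = 0) : Set.EqOn g 0 s := by
  have hnonneg : 0 ≤ᵐ[μ.restrict s] fun x => g x ^ 2 * ρ x :=
    (ae_restrict_iff' hsm).2 (ae_of_all _ fun x hx => by have := hρ x hx; positivity)
  have hsq_zero := (integral_eq_zero_iff_of_nonneg_ae hnonneg hint).1 h
  have hg_zero : g =ᵐ[μ.restrict s] 0 := by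
    filter_upwards [hsq_zero, ae_restrict_mem hsm] with x hx hxs
    simpa [(hρ x hxs).ne'] using hx
  exact μ.eqOn_of_ae_eq hg_zero hg continuousOn_const hs

theorem Convex.subset_closure_interior {𝕜 E : Type*} [Field 𝕜] [LinearOrder 𝕜]
    [IsStrictOrderedRing 𝕜] [AddCommGroup E] [Module 𝕜 E] [TopologicalSpace E]
    [IsTopologicalAddGroup E] [TopologicalSpace 𝕜] [OrderTopology 𝕜] [ContinuousSMul 𝕜 E]
    {s : Set E} (hs : Convex 𝕜 s) (hs' : (interior s).Nonempty) : s ⊆ closure (interior s) :=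
  subset_closure.trans (hs.closure_interior_eq_closure_of_nonempty_interior hs').symm.subset

theorem Convex.apply_add_eq_of_fderiv_apply_eq_zero {E F : Type*} [NormedAddCommGroup E]
    [NormedSpace ℝ E] [NormedAddCommGroup F] [NormedSpace ℝ F] {X : Set E} (hX : Convex ℝ X)
    {f : E → F} (hf : ∀ y ∈ X, DifferentiableAt ℝ f y) {v : E}
    (hv : ∀ y ∈ X, fderiv ℝ f y v = 0) {x : E} (hx : x ∈ X) (hxv : x + v ∈ X) :
    f (x + v) = f x := by
  have hmem : ∀ s ∈ Set.Icc (0 : ℝ) 1, x + s • v ∈ X := fun s hs => hX.add_smul_mem hx hxv hs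
  have hderiv : ∀ s ∈ Set.Icc (0 : ℝ) 1, HasDerivAt (fun s : ℝ => f (x + s • v)) 0 s := by
    intro s hs
    have hline : HasDerivAt (fun s : ℝ => x + s • v) v s := by
      simpa using ((hasDerivAt_id s).smul_const v).const_add x
    simpa [Function.comp_def, hv _ (hmem s hs)] using
      (hf _ (hmem s hs)).hasFDerivAt.comp_hasDerivAt s hline
  have hconst := constant_of_has_deriv_right_zero
    (fun s hs => (hderiv s hs).continuousAt.continuousWithinAt)
    (fun s hs => (hderiv s (Set.Ico_subset_Icc_self hs)).hasDerivWithinAt)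
    1 (Set.right_mem_Icc.2 zero_le_one)
  simpa using hconst

theorem stmt5_general {m : ℕ} (X : Set (Fin m → ℝ)) (hX : IsCompact X) (hconv : Convex ℝ X)
    (hint_ne : (interior X).Nonempty)
    (ρ : (Fin m → ℝ) → ℝ) (hρpos : ∀ x ∈ X, 0 < ρ x) (hρc : ContinuousOn ρ X)
    (f : (Fin m → ℝ) → ℝ) (hf : ContDiff ℝ 1 f)
    (C : Matrix (Fin m) (Fin m) ℝ)
    (hC : ∀ i j, C i j = ∫ x in X, grad f x i * grad f x j * ρ x)
    (w : Fin m → ℝ)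
    (heig : C.mulVec w = 0) :
    (∀ x ∈ X, ∑ i, grad f x i * w i = 0) ∧
    (∀ x : Fin m → ℝ, ∀ t : ℝ, x ∈ X → x + t • w ∈ X → f (x + t • w) = f x) := by
  have hgrad_cont : ∀ i, Continuous fun x => grad f x i := fun i =>
    (hf.continuous_fderiv one_ne_zero).clm_apply continuous_const
  have hdir_cont : Continuous fun x => ∑ i, grad f x i * w i := by fun_prop
  have hquad : ∫ x in X, (∑ i, grad f x i * w i) ^ 2 * ρ x = 0 := by
    rw [integral_sq_sum_mul_eq_dotProduct_mulVec (fun i x => grad f x i) ρ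
      (fun i j => (((hgrad_cont i).mul (hgrad_cont j)).continuousOn.mul hρc).integrableOn_compact hX)
      hC w, heig, dotProduct_zero]
  have hdir_zero : ∀ x ∈ X, ∑ i, grad f x i * w i = 0 :=
    eqOn_zero_of_setIntegral_sq_mul_eq_zero hX.measurableSet
      (hconv.subset_closure_interior hint_ne) hdir_cont.continuousOn hρpos
      (((hdir_cont.pow 2).continuousOn.mul hρc).integrableOn_compact hX) hquad
  refine ⟨hdir_zero, fun x t hx hxt => ?_⟩
  refine hconv.apply_add_eq_of_fderiv_apply_eq_zero
    (fun y _ => hf.differentiable one_ne_zero y) (fun y hy => ?_) hx hxt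
  rw [map_smul, ← sum_grad_mul_eq_fderiv, hdir_zero y hy, smul_zero]

/-- if `w` is a unit eigenvector of `C` with eigenvalue `0` and `ρ` is
continuous and strictly positive on the convex compact set `X` (with nonempty
interior), then `(∇f(x))ᵀ w = 0` on `X`, and `f` is constant along the direction
`w` inside `X`. -/
theorem stmt5 {m : ℕ} (X : Set (Fin m → ℝ)) (hX : IsCompact X) (hconv : Convex ℝ X)
    (hint_ne : (interior X).Nonempty)
    (ρ : (Fin m → ℝ) → ℝ) (hρpos : ∀ x ∈ X, 0 < ρ x) (hρc : ContinuousOn ρ X)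
    (f : (Fin m → ℝ) → ℝ) (hf : ContDiff ℝ 1 f)
    (C : Matrix (Fin m) (Fin m) ℝ)
    (hC : ∀ i j, C i j = ∫ x in X, grad f x i * grad f x j * ρ x)
    (w : Fin m → ℝ) (hw : ∑ i, (w i)^2 = 1)
    (heig : C.mulVec w = 0) :
    (∀ x ∈ X, ∑ i, grad f x i * w i = 0) ∧
    (∀ x : Fin m → ℝ, ∀ t : ℝ, x ∈ X → x + t • w ∈ X → f (x + t • w) = f x) :=
  stmt5_general X hX hconv hint_ne ρ hρpos hρc f hf C hC w heig
end

section
/- If f(x) = g(w₁^T x) + h(x) where the perturbation h satisfies ∫_X ‖∇h‖² ρ dx ≤ ε, then the eigenvalues λ₂, …, λ_m of C = ∫ (∇f)(∇f)^T ρ dx orthogonal to w₁ satisfy λ₂ + ⋯ + λ_m ≤ ∫_X ‖(I − w₁w₁^T)∇f‖² ρ dx = ∫_X ‖(I − w₁w₁^T)∇h‖² ρ dx ≤ ε. -/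
open MeasureTheory Matrix

/-!
Because `w₁` is a unit vector, `∇f = g'(w₁ᵀx) w₁ + ∇h`, and the projection `I − w₁w₁ᵀ` kills the
ridge term, so `(I − w₁w₁ᵀ)∇f = (I − w₁w₁ᵀ)∇h`, whose squared norm is `‖∇h‖² − (w₁ᵀ∇h)²`.
Integrating the analogous identity for `f` gives `∫ ‖(I − w₁w₁ᵀ)∇f‖² ρ = tr C − w₁ᵀCw₁`, and the
Rayleigh bound `w₁ᵀCw₁ ≤ λ₁` turns this into `λ₂ + ⋯ + λ_m = tr C − λ₁ ≤ ∫ ‖(I − w₁w₁ᵀ)∇f‖² ρ`.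
-/

open Finset

section Gradient

variable {m : ℕ} {x : Fin m → ℝ}

lemma grad_add {f g : (Fin m → ℝ) → ℝ} (hf : DifferentiableAt ℝ f x)
    (hg : DifferentiableAt ℝ g x) : grad (fun y => f y + g y) x = grad f x + grad g x := by
  ext i
  simp only [grad, fderiv_fun_add hf hg, _root_.add_apply, Pi.add_apply]

lemma hasFDerivAt_dotProduct (w : Fin m → ℝ) :
    HasFDerivAt (fun y => w ⬝ᵥ y) (LinearMap.toContinuousLinearMap (dotProductBilin ℝ ℝ w)) x :=
  (LinearMap.toContinuousLinearMap (dotProductBilin ℝ ℝ w)).hasFDerivAt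

lemma grad_comp_dotProduct {φ : ℝ → ℝ} (w : Fin m → ℝ) (hφ : DifferentiableAt ℝ φ (w ⬝ᵥ x)) :
    grad (fun y => φ (w ⬝ᵥ y)) x = deriv φ (w ⬝ᵥ x) • w := by
  ext i
  have hcomp : HasFDerivAt (fun y => φ (w ⬝ᵥ y))
      (deriv φ (w ⬝ᵥ x) • LinearMap.toContinuousLinearMap (dotProductBilin ℝ ℝ w)) x :=
    hφ.hasDerivAt.comp_hasFDerivAt x (hasFDerivAt_dotProduct w)
  rw [grad, hcomp.fderiv]
  simp [dotProductBilin]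

lemma grad_comp_dotProduct_add {φ : ℝ → ℝ} {h : (Fin m → ℝ) → ℝ} (w : Fin m → ℝ)
    (hφ : DifferentiableAt ℝ φ (w ⬝ᵥ x)) (hh : DifferentiableAt ℝ h x) :
    grad (fun y => φ (w ⬝ᵥ y) + h y) x = deriv φ (w ⬝ᵥ x) • w + grad h x := by
  rw [grad_add (f := fun y => φ (w ⬝ᵥ y)) (hφ.comp x (hasFDerivAt_dotProduct w).differentiableAt)
    hh, grad_comp_dotProduct w hφ]

end Gradient

section Projection

variable {m : ℕ} {w : Fin m → ℝ}

lemma dotProduct_smul_self_add (hw : w ⬝ᵥ w = 1) (a : ℝ) (v : Fin m → ℝ) :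
    w ⬝ᵥ (a • w + v) = a + w ⬝ᵥ v := by
  rw [dotProduct_add, dotProduct_smul, hw, smul_eq_mul, mul_one]

lemma sum_sq_sub_dotProduct_mul (hw : w ⬝ᵥ w = 1) (v : Fin m → ℝ) :
    ∑ i, (v i - (w ⬝ᵥ v) * w i) ^ 2 = ∑ i, v i ^ 2 - (w ⬝ᵥ v) ^ 2 := by
  have hexpand : ∀ i, (v i - (w ⬝ᵥ v) * w i) ^ 2
      = v i ^ 2 - 2 * (w ⬝ᵥ v) * (w i * v i) + (w ⬝ᵥ v) ^ 2 * (w i * w i) := fun i => by ring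
  simp only [hexpand, sum_add_distrib, sum_sub_distrib, ← mul_sum]
  change _ - _ * (w ⬝ᵥ v) + _ * (w ⬝ᵥ w) = _
  rw [hw]
  ring

end Projection

section Conjugation

variable {m : ℕ} {W : Matrix (Fin m) (Fin m) ℝ} {Λ : Fin m → ℝ}

lemma trace_conj_diagonal (hW : Wᵀ * W = 1) : (W * diagonal Λ * Wᵀ).trace = ∑ k, Λ k := by
  rw [trace_mul_cycle, hW, one_mul, trace_diagonal]

lemma dotProduct_conj_diagonal_mulVec_le (hW : W * Wᵀ = 1) {M : ℝ} (hΛ : ∀ k, Λ k ≤ M)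
    (w : Fin m → ℝ) : w ⬝ᵥ (W * diagonal Λ * Wᵀ) *ᵥ w ≤ M * (w ⬝ᵥ w) := by
  set v := Wᵀ *ᵥ w
  have hquad : w ⬝ᵥ (W * diagonal Λ * Wᵀ) *ᵥ w = ∑ k, Λ k * v k ^ 2 := by
    rw [← mulVec_mulVec, ← mulVec_mulVec, dotProduct_mulVec, ← mulVec_transpose]
    simp only [dotProduct, mulVec_diagonal, v]
    exact sum_congr rfl fun k _ => by ring
  have hnorm : ∑ k, v k ^ 2 = w ⬝ᵥ w := by
    rw [show w ⬝ᵥ w = w ⬝ᵥ (W * Wᵀ) *ᵥ w by rw [hW, one_mulVec], ← mulVec_mulVec,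
      dotProduct_mulVec, ← mulVec_transpose]
    simp only [dotProduct, sq, v]
  rw [hquad, ← hnorm, mul_sum]
  exact sum_le_sum fun k _ => mul_le_mul_of_nonneg_right (hΛ k) (sq_nonneg _)

end Conjugation

lemma Fin.sum_filter_one_le {β : Type*} [AddCommGroup β] {m : ℕ} (hm : 0 < m) (Λ : Fin m → β) :
    ∑ k ∈ univ.filter (fun k : Fin m => 1 ≤ (k : ℕ)), Λ k = ∑ k, Λ k - Λ ⟨0, hm⟩ := by
  rw [eq_sub_iff_add_eq, ← sum_filter_add_sum_filter_not univ (fun k : Fin m => 1 ≤ (k : ℕ))]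
  congr
  rw [sum_eq_single_of_mem ⟨0, hm⟩ (by simp)]
  intro k hk hne
  exact absurd (Fin.ext (by simpa using hk)) hne

section SecondMoment

variable {α : Type*} [MeasurableSpace α] {μ : Measure α} {m : ℕ} {u : α → Fin m → ℝ}
  {ρ : α → ℝ}

noncomputable def secondMoment (u : α → Fin m → ℝ) (ρ : α → ℝ) (μ : Measure α) :
    Matrix (Fin m) (Fin m) ℝ :=
  of fun i j => ∫ x, u x i * u x j * ρ x ∂μ

lemma sum_sq_mul_eq_sum (v : Fin m → ℝ) (r : ℝ) : (∑ i, v i ^ 2) * r = ∑ i, v i * v i * r := by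
  simp only [sum_mul, sq]

lemma dotProduct_sq_mul_eq_sum (w v : Fin m → ℝ) (r : ℝ) :
    (w ⬝ᵥ v) ^ 2 * r = ∑ i, ∑ j, w i * w j * (v i * v j * r) := by
  rw [sq, dotProduct, sum_mul_sum, sum_mul]
  exact sum_congr rfl fun i _ => by rw [sum_mul]; exact sum_congr rfl fun j _ => by ring

lemma integrable_sum_sq_mul (hu : ∀ i j, Integrable (fun x => u x i * u x j * ρ x) μ) :
    Integrable (fun x => (∑ i, u x i ^ 2) * ρ x) μ := by
  simp only [sum_sq_mul_eq_sum]
  exact integrable_finsetSum _ fun i _ => hu i i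

lemma integrable_dotProduct_sq_mul (hu : ∀ i j, Integrable (fun x => u x i * u x j * ρ x) μ)
    (w : Fin m → ℝ) : Integrable (fun x => (w ⬝ᵥ u x) ^ 2 * ρ x) μ := by
  simp only [dotProduct_sq_mul_eq_sum]
  exact integrable_finsetSum _ fun i _ => integrable_finsetSum _ fun j _ => (hu i j).const_mul _

lemma integral_sum_sq_mul (hu : ∀ i j, Integrable (fun x => u x i * u x j * ρ x) μ) :
    ∫ x, (∑ i, u x i ^ 2) * ρ x ∂μ = (secondMoment u ρ μ).trace := by
  simp only [sum_sq_mul_eq_sum]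
  rw [integral_finsetSum _ fun i _ => hu i i]
  rfl

lemma integral_dotProduct_sq_mul (hu : ∀ i j, Integrable (fun x => u x i * u x j * ρ x) μ)
    (w : Fin m → ℝ) : ∫ x, (w ⬝ᵥ u x) ^ 2 * ρ x ∂μ = w ⬝ᵥ secondMoment u ρ μ *ᵥ w := by
  simp only [dotProduct_sq_mul_eq_sum]
  rw [integral_finsetSum _ fun i _ =>
    integrable_finsetSum _ fun j _ => (hu i j).const_mul _]
  simp only [integral_finsetSum _ fun j _ => (hu _ j).const_mul _, integral_const_mul,
    dotProduct, mulVec, mul_sum, secondMoment, of_apply]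
  exact sum_congr rfl fun i _ => sum_congr rfl fun j _ => by ring

lemma integral_sum_sq_sub_dotProduct_mul
    (hu : ∀ i j, Integrable (fun x => u x i * u x j * ρ x) μ) {w : Fin m → ℝ}
    (hw : w ⬝ᵥ w = 1) :
    ∫ x, (∑ i, (u x i - (w ⬝ᵥ u x) * w i) ^ 2) * ρ x ∂μ
      = ∫ x, (∑ i, u x i ^ 2) * ρ x ∂μ - ∫ x, (w ⬝ᵥ u x) ^ 2 * ρ x ∂μ := by
  simp only [sum_sq_sub_dotProduct_mul hw, sub_mul]
  exact integral_sub (integrable_sum_sq_mul hu) (integrable_dotProduct_sq_mul hu w)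

end SecondMoment

theorem stmt19_general {m : ℕ} (hm : 0 < m)
    (X : Set (Fin m → ℝ)) (hX : IsCompact X)
    (ρ : (Fin m → ℝ) → ℝ) (hρ : ∀ x ∈ X, 0 ≤ ρ x)
    (w₁ : Fin m → ℝ) (hw₁ : ∑ i, (w₁ i)^2 = 1)
    (g : ℝ → ℝ) (hg : ContDiff ℝ 1 g)
    (h : (Fin m → ℝ) → ℝ) (hh : ContDiff ℝ 1 h)
    (f : (Fin m → ℝ) → ℝ) (hfdef : ∀ x, f x = g (∑ i, w₁ i * x i) + h x)
    (ε : ℝ)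
    (hhε : ∫ x in X, (∑ i, (grad h x i)^2) * ρ x ≤ ε)
    (hintf : ∀ i j : Fin m,
      IntegrableOn (fun x => grad f x i * grad f x j * ρ x) X volume)
    (hinth : ∀ i j : Fin m,
      IntegrableOn (fun x => grad h x i * grad h x j * ρ x) X volume)
    (C : Matrix (Fin m) (Fin m) ℝ)
    (hC : ∀ i j, C i j = ∫ x in X, grad f x i * grad f x j * ρ x)
    (W : Matrix (Fin m) (Fin m) ℝ) (hW : Wᵀ * W = 1)
    (Λ : Fin m → ℝ) (hord : Antitone Λ)
    (hdecomp : C = W * Matrix.diagonal Λ * Wᵀ) :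
    (∑ k ∈ Finset.univ.filter (fun k : Fin m => 1 ≤ (k : ℕ)), Λ k)
      ≤ (∫ x in X, (∑ i,
          (grad f x i - (∑ j, w₁ j * grad f x j) * w₁ i)^2) * ρ x) ∧
    (∫ x in X, (∑ i, (grad f x i - (∑ j, w₁ j * grad f x j) * w₁ i)^2) * ρ x)
      = (∫ x in X, (∑ i, (grad h x i - (∑ j, w₁ j * grad h x j) * w₁ i)^2) * ρ x) ∧
    (∫ x in X, (∑ i, (grad h x i - (∑ j, w₁ j * grad h x j) * w₁ i)^2) * ρ x) ≤ ε := by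
  have hw : w₁ ⬝ᵥ w₁ = 1 := by simpa only [dotProduct, sq] using hw₁
  have hgrad : ∀ x, grad f x = deriv g (w₁ ⬝ᵥ x) • w₁ + grad h x := fun x => by
    rw [show f = fun y => g (w₁ ⬝ᵥ y) + h y from funext hfdef]
    exact grad_comp_dotProduct_add w₁ (hg.differentiable one_ne_zero _)
      (hh.differentiable one_ne_zero x)
  have hproj : ∀ x i, grad f x i - (w₁ ⬝ᵥ grad f x) * w₁ i
      = grad h x i - (w₁ ⬝ᵥ grad h x) * w₁ i := fun x i => by
    rw [hgrad x, dotProduct_smul_self_add hw, Pi.add_apply, Pi.smul_apply, smul_eq_mul]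
    ring
  refine ⟨?_, ?_, ?_⟩
  · have hC' : C = secondMoment (grad f) ρ (volume.restrict X) := Matrix.ext hC
    have hrayleigh : w₁ ⬝ᵥ C *ᵥ w₁ ≤ Λ ⟨0, hm⟩ := by
      simpa only [hdecomp, hw, mul_one] using dotProduct_conj_diagonal_mulVec_le
        (mul_eq_one_comm.mp hW) (fun k => hord (Nat.zero_le _)) w₁
    calc ∑ k ∈ univ.filter (fun k : Fin m => 1 ≤ (k : ℕ)), Λ k
        = C.trace - Λ ⟨0, hm⟩ := by rw [Fin.sum_filter_one_le, hdecomp, trace_conj_diagonal hW]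
      _ ≤ C.trace - w₁ ⬝ᵥ C *ᵥ w₁ := by linarith
      _ = _ := by
        rw [hC', ← integral_sum_sq_mul hintf, ← integral_dotProduct_sq_mul hintf]
        exact (integral_sum_sq_sub_dotProduct_mul hintf hw).symm
  · congr 1
    funext x
    congr 1
    exact sum_congr rfl fun i _ => congrArg (· ^ 2) (hproj x i)
  · calc _ = (∫ x in X, (∑ i, grad h x i ^ 2) * ρ x) - ∫ x in X, (w₁ ⬝ᵥ grad h x) ^ 2 * ρ x :=
          integral_sum_sq_sub_dotProduct_mul hinth hw
      _ ≤ ∫ x in X, (∑ i, grad h x i ^ 2) * ρ x :=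
          sub_le_self _ (setIntegral_nonneg hX.measurableSet fun x hx =>
            mul_nonneg (sq_nonneg _) (hρ x hx))
      _ ≤ ε := hhε

/-- if `f = g(w₁ᵀ·) + h` with `∫_X ‖∇h‖² ρ dx ≤ ε`, then the trailing
eigenvalues of `C` satisfy
`λ₂ + ⋯ + λ_m ≤ ∫_X ‖(I − w₁w₁ᵀ)∇f‖² ρ dx = ∫_X ‖(I − w₁w₁ᵀ)∇h‖² ρ dx ≤ ε`. -/
theorem stmt19 {m : ℕ} (hm : 0 < m)
    (X : Set (Fin m → ℝ)) (hX : IsCompact X)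
    (ρ : (Fin m → ℝ) → ℝ) (hρ : ∀ x ∈ X, 0 ≤ ρ x) (hρ1 : ∫ x in X, ρ x = 1)
    (w₁ : Fin m → ℝ) (hw₁ : ∑ i, (w₁ i)^2 = 1)
    (g : ℝ → ℝ) (hg : ContDiff ℝ 1 g)
    (h : (Fin m → ℝ) → ℝ) (hh : ContDiff ℝ 1 h)
    (f : (Fin m → ℝ) → ℝ) (hfdef : ∀ x, f x = g (∑ i, w₁ i * x i) + h x)
    (ε : ℝ)
    (hhε : ∫ x in X, (∑ i, (grad h x i)^2) * ρ x ≤ ε)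
    (hintf : ∀ i j : Fin m,
      IntegrableOn (fun x => grad f x i * grad f x j * ρ x) X volume)
    (hinth : ∀ i j : Fin m,
      IntegrableOn (fun x => grad h x i * grad h x j * ρ x) X volume)
    (C : Matrix (Fin m) (Fin m) ℝ)
    (hC : ∀ i j, C i j = ∫ x in X, grad f x i * grad f x j * ρ x)
    (W : Matrix (Fin m) (Fin m) ℝ) (hW : Wᵀ * W = 1)
    (Λ : Fin m → ℝ) (hord : Antitone Λ)
    (hdecomp : C = W * Matrix.diagonal Λ * Wᵀ) :
    (∑ k ∈ Finset.univ.filter (fun k : Fin m => 1 ≤ (k : ℕ)), Λ k)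
      ≤ (∫ x in X, (∑ i,
          (grad f x i - (∑ j, w₁ j * grad f x j) * w₁ i)^2) * ρ x) ∧
    (∫ x in X, (∑ i, (grad f x i - (∑ j, w₁ j * grad f x j) * w₁ i)^2) * ρ x)
      = (∫ x in X, (∑ i, (grad h x i - (∑ j, w₁ j * grad h x j) * w₁ i)^2) * ρ x) ∧
    (∫ x in X, (∑ i, (grad h x i - (∑ j, w₁ j * grad h x j) * w₁ i)^2) * ρ x) ≤ ε :=
  stmt19_general hm X hX ρ hρ w₁ hw₁ g hg h hh f hfdef ε hhε hintf hinth C hC W hW Λ hord hdecomp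
end
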